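/- arXiv:0711.1157 — 7 statements merged into one kernel-verified Lean document; each statement's English description precedes it below -/
import Mathlib

section
/- For every edge of K_{2,3}, the graph obtained from K_{2,3} by deleting that edge is unit-distance embeddable: for every i₀ : Fin 2 and j₀ : Fin 3 there exists an injective map f : (Fin 2 ⊕ Fin 3) → ℝ² with dist (f (inl i)) (f (inr j)) = 1 for every pair (i, j) ≠ (i₀, j₀). -/
/-!
Place the vertex `inl i₀` at `q = (1, 0)` and the other left vertex at the origin `p`. The two
common unit-distance neighbours `(1/2, ±√3/2)` of `p` and `q` receive two right vertices, and the
right vertex `inr j₀`, which only has to be adjacent to `p`, goes to `(-1, 0)`; its distance `2`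
from `q` keeps it apart from the other points. Permuting the two sides reduces every deleted edge
to `(inl 0, inr 2)`.
-/

open Function

def IsUnitDistanceEmbeddingMinusEdge {α β X : Type*} [Dist X] (f : α ⊕ β → X) (i₀ : α)
    (j₀ : β) : Prop :=
  Injective f ∧ ∀ i j, (i, j) ≠ (i₀, j₀) → dist (f (.inl i)) (f (.inr j)) = 1

theorem IsUnitDistanceEmbeddingMinusEdge.comp_swap {α β X : Type*} [Dist X] [DecidableEq α]
    [DecidableEq β] {f : α ⊕ β → X} {i₁ : α} {j₁ : β}
    (hf : IsUnitDistanceEmbeddingMinusEdge f i₁ j₁) (i₀ : α) (j₀ : β) :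
    IsUnitDistanceEmbeddingMinusEdge (f ∘ Sum.map (Equiv.swap i₀ i₁) (Equiv.swap j₀ j₁)) i₀ j₀ := by
  refine ⟨hf.1.comp (Sum.map_injective.2 ⟨Equiv.injective _, Equiv.injective _⟩),
    fun i j hij => hf.2 _ _ fun h => hij ?_⟩
  simpa only [Prod.mk.injEq, Equiv.swap_apply_eq_iff, Equiv.swap_apply_right] using h

theorem isUnitDistanceEmbeddingMinusEdge_of_dist {X : Type*} [MetricSpace X] {p q t b r : X}
    (hqp : dist q p = 1) (hqt : dist q t = 1) (hqb : dist q b = 1) (hqr : dist q r = 2)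
    (hpt : dist p t = 1) (hpb : dist p b = 1) (hpr : dist p r = 1) (htb : t ≠ b) :
    IsUnitDistanceEmbeddingMinusEdge (Sum.elim ![q, p] ![t, b, r]) 0 2 := by
  have ne_of_dist_eq_one {x y : X} (h : dist x y = 1) : x ≠ y := dist_ne_zero.1 (by simp [h])
  have hq_ne_r : q ≠ r := dist_ne_zero.1 (by simp [hqr])
  have htr : t ≠ r := fun h => by norm_num [h, hqr] at hqt
  have hbr : b ≠ r := fun h => by norm_num [h, hqr] at hqb
  refine ⟨Injective.sumElim ?_ ?_ ?_, fun i j hij => ?_⟩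
  · rw [← List.nodup_ofFn]
    simpa using ne_of_dist_eq_one hqp
  · rw [← List.nodup_ofFn]
    simp [htb, htr, hbr]
  · simp [Fin.forall_fin_succ, hq_ne_r, ne_of_dist_eq_one hqt, ne_of_dist_eq_one hqb,
      ne_of_dist_eq_one hpt, ne_of_dist_eq_one hpb, ne_of_dist_eq_one hpr]
  · fin_cases i <;> fin_cases j <;> simp_all

theorem EuclideanSpace.dist_vecTwo_eq {a b c d r : ℝ} (hr : 0 ≤ r)
    (h : (a - c) ^ 2 + (b - d) ^ 2 = r ^ 2) : dist !₂[a, b] !₂[c, d] = r := by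
  simp [EuclideanSpace.dist_eq, Fin.sum_univ_two, Real.dist_eq, sq_abs, h, Real.sqrt_sq hr]

theorem isUnitDistanceEmbeddingMinusEdge_plane :
    IsUnitDistanceEmbeddingMinusEdge
      (Sum.elim ![!₂[1, 0], !₂[0, 0]] ![!₂[1 / 2, √3 / 2], !₂[1 / 2, -(√3 / 2)], !₂[-1, 0]])
      (0 : Fin 2) (2 : Fin 3) := by
  have h3 : √3 ^ 2 = 3 := Real.sq_sqrt (by norm_num)
  have unit {a b c d : ℝ} (h : (a - c) ^ 2 + (b - d) ^ 2 = 1) : dist !₂[a, b] !₂[c, d] = 1 :=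
    EuclideanSpace.dist_vecTwo_eq zero_le_one (by rw [h, one_pow])
  refine isUnitDistanceEmbeddingMinusEdge_of_dist (hqp := unit (by norm_num))
    (hqt := unit (by linear_combination h3 / 4)) (hqb := unit (by linear_combination h3 / 4))
    (hqr := EuclideanSpace.dist_vecTwo_eq zero_le_two (by norm_num))
    (hpt := unit (by linear_combination h3 / 4)) (hpb := unit (by linear_combination h3 / 4))
    (hpr := unit (by norm_num)) (htb := fun h => ?_)
  have h1 : √3 / 2 = -(√3 / 2) := by simpa using congrArg (· 1) h
  linarith [Real.sqrt_pos.2 (show (0 : ℝ) < 3 by norm_num)]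

/-- For every edge of `K_{2,3}`, the graph obtained by deleting that edge is
unit-distance embeddable. -/
theorem k23_minus_edge_unit_distance_embeddable (i₀ : Fin 2) (j₀ : Fin 3) :
    ∃ f : Fin 2 ⊕ Fin 3 → EuclideanSpace ℝ (Fin 2),
      Function.Injective f ∧
        ∀ (i : Fin 2) (j : Fin 3), (i, j) ≠ (i₀, j₀) →
          dist (f (Sum.inl i)) (f (Sum.inr j)) = 1 :=
  ⟨_, isUnitDistanceEmbeddingMinusEdge_plane.comp_swap i₀ j₀⟩
end

section
/- The Moser spindle is unit-distance embeddable: there exists an injective map f : Fin 7 → ℝ² such that dist (f u) (f v) = 1 for every edge {u, v} of the Moser spindle. -/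
/-- The Moser spindle: the graph on `Fin 7` (vertices `1,…,7` relabelled `0,…,6`) with the
11 edges `{1,2}, {1,3}, {1,4}, {1,5}, {2,4}, {3,5}, {2,6}, {4,6}, {3,7}, {5,7}, {6,7}`. -/
def moserSpindle : SimpleGraph (Fin 7) :=
  SimpleGraph.fromEdgeSet
    {s(0, 1), s(0, 2), s(0, 3), s(0, 4), s(1, 3), s(2, 4),
     s(1, 5), s(3, 5), s(2, 6), s(4, 6), s(5, 6)}

/-!
With `ω = e^{iπ/3}` and `‖a‖ = 1`, the points `0, a, aω, a(1 + ω)` of `ℂ` form a rhombus made of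
two unit equilateral triangles, whose far tip `a(1 + ω)` lies at distance `√3` from `0`. Two such
rhombi for unit `a`, `b` give every edge of the spindle except the one joining the tips, and the
tips are at distance `√3 ‖a - b‖`, which is `1` once `‖a - b‖ = 1 / √3`. The seven points are
distinct as soon as `b ≠ a` and `b ≠ aω^{±1}`. The picture is carried to `ℝ²` by the isometry
`ℂ ≃ ℝ²`.
-/

open Complex Function SimpleGraph

section UnitDistance

variable {V P Q : Type*}

def IsUnitDistanceEmbedding [PseudoMetricSpace P] (G : SimpleGraph V) (f : V → P) : Prop :=
  Injective f ∧ ∀ u v, G.Adj u v → dist (f u) (f v) = 1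

theorem IsUnitDistanceEmbedding.comp_isometry [MetricSpace P] [PseudoMetricSpace Q]
    {G : SimpleGraph V} {f : V → P} {g : P → Q} (hf : IsUnitDistanceEmbedding G f)
    (hg : Isometry g) : IsUnitDistanceEmbedding G (g ∘ f) :=
  ⟨hg.injective.comp hf.1, fun u v huv => (hg.dist_eq _ _).trans (hf.2 u v huv)⟩

theorem dist_eq_one_of_fromEdgeSet_adj [PseudoMetricSpace P] {s : Set (Sym2 V)} {f : V → P}
    (hs : ∀ e ∈ s, Sym2.lift ⟨fun u v => dist (f u) (f v), fun _ _ => dist_comm _ _⟩ e = 1)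
    {u v : V} (huv : (fromEdgeSet s).Adj u v) : dist (f u) (f v) = 1 :=
  hs _ ((fromEdgeSet_adj s).1 huv).1

end UnitDistance

namespace MoserSpindle

/-- `e^{iπ/3}` -/
noncomputable def ω : ℂ := ⟨1 / 2, √3 / 2⟩

theorem norm_ω : ‖ω‖ = 1 := by
  simp [norm_eq_sqrt_sq_add_sq, ω, div_pow]; norm_num

theorem norm_one_sub_ω : ‖1 - ω‖ = 1 := by
  simp [norm_eq_sqrt_sq_add_sq, ω, div_pow]; norm_num

theorem norm_one_add_ω : ‖1 + ω‖ = √3 := by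
  simp [norm_eq_sqrt_sq_add_sq, ω, div_pow]; norm_num

theorem ω_ne_zero : ω ≠ 0 := by
  simp [ω, Complex.ext_iff]

theorem ω_ne_one : ω ≠ 1 := by
  simp [ω, Complex.ext_iff]

theorem one_add_ω_ne_zero : 1 + ω ≠ 0 := by
  simp [ω, Complex.ext_iff]

noncomputable def spindle (a b : ℂ) : Fin 7 → ℂ :=
  ![0, a, b, a * ω, b * ω, a * (1 + ω), b * (1 + ω)]

variable {a b : ℂ}

theorem dist_spindle_eq_one_of_adj (ha : ‖a‖ = 1) (hb : ‖b‖ = 1) (hab : ‖a - b‖ = (√3)⁻¹)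
    {u v : Fin 7} (huv : moserSpindle.Adj u v) : dist (spindle a b u) (spindle a b v) = 1 := by
  refine dist_eq_one_of_fromEdgeSet_adj ?_ huv
  simp only [Set.forall_mem_insert, Set.mem_singleton_iff, forall_eq, Sym2.lift_mk]
  simp [spindle, dist_eq_norm, ← mul_sub, ← mul_one_sub, ← sub_mul, ha, hb, hab, norm_ω,
    norm_one_sub_ω, norm_one_add_ω]

theorem spindle_injective (ha : ‖a‖ = 1) (hb : ‖b‖ = 1) (hab : a ≠ b) (hab₁ : ‖a - b‖ ≠ 1) :
    Injective (spindle a b) := by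
  have ha₀ : a ≠ 0 := norm_ne_zero_iff.1 (by simp [ha])
  have hb₀ : b ≠ 0 := norm_ne_zero_iff.1 (by simp [hb])
  have h3 : √3 ≠ 1 := by simp
  have haω : a * ω ≠ b := fun h => hab₁ (by
    rw [← h, ← mul_one_sub, norm_mul, ha, norm_one_sub_ω, mul_one])
  have hbω : b * ω ≠ a := fun h => hab₁ (by
    rw [← h, norm_sub_rev, ← mul_one_sub, norm_mul, hb, norm_one_sub_ω, mul_one])
  intro u v huv
  -- the norms `0`, `1`, `√3` separate the layers; inside a layer the facts above apply
  have hn := congrArg norm huv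
  fin_cases u <;> fin_cases v <;>
    simp [spindle, ha, hb, norm_ω, norm_one_add_ω, ha₀, hb₀, ω_ne_zero, ω_ne_one,
      one_add_ω_ne_zero, h3.symm, hab, hab.symm, haω, hbω, haω.symm, hbω.symm] at huv hn ⊢

theorem spindle_isUnitDistanceEmbedding (ha : ‖a‖ = 1) (hb : ‖b‖ = 1)
    (hab : ‖a - b‖ = (√3)⁻¹) : IsUnitDistanceEmbedding moserSpindle (spindle a b) := by
  have hab₀ : a ≠ b := sub_ne_zero.1 (norm_ne_zero_iff.1 (by rw [hab]; positivity))
  have hab₁ : ‖a - b‖ ≠ 1 := by simp [hab]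
  exact ⟨spindle_injective ha hb hab₀ hab₁, fun _ _ => dist_spindle_eq_one_of_adj ha hb hab⟩

/-- `e^{iθ}` with `cos θ = 5/6`, so that `‖1 - β‖² = 2 - 2 cos θ = 1/3`. -/
noncomputable def β : ℂ := ⟨5 / 6, √11 / 6⟩

theorem norm_β : ‖β‖ = 1 := by
  simp [norm_eq_sqrt_sq_add_sq, β, div_pow]; norm_num

theorem norm_one_sub_β : ‖1 - β‖ = (√3)⁻¹ := by
  simp [norm_eq_sqrt_sq_add_sq, β, div_pow, ← Real.sqrt_inv]; norm_num

end MoserSpindle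

/-- The Moser spindle is unit-distance embeddable. -/
theorem moserSpindle_unit_distance_embeddable :
    ∃ f : Fin 7 → EuclideanSpace ℝ (Fin 2),
      Function.Injective f ∧
        ∀ u v : Fin 7, moserSpindle.Adj u v → dist (f u) (f v) = 1 :=
  ⟨_, (MoserSpindle.spindle_isUnitDistanceEmbedding norm_one MoserSpindle.norm_β
    MoserSpindle.norm_one_sub_β).comp_isometry Complex.orthonormalBasisOneI.repr.isometry⟩
end

section
/- The chromatic number of the Moser spindle is exactly 4: the Moser spindle has a proper vertex coloring with 4 colors, and it has no proper vertex coloring with 3 colors. -/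
theorem eq_of_ne_of_ne_of_card_le_three {α : Type*} [Fintype α] (hα : Fintype.card α ≤ 3)
    {a b c d : α} (hab : a ≠ b) (hac : a ≠ c) (hbc : b ≠ c) (hdb : d ≠ b) (hdc : d ≠ c) :
    d = a := by
  classical
  by_contra hda
  have : ({a, b, c, d} : Finset α).card = 4 := by
    rw [Finset.card_insert_of_notMem (by simp [hab, hac, Ne.symm hda]),
      Finset.card_insert_of_notMem (by simp [hbc, Ne.symm hdb]),
      Finset.card_pair (Ne.symm hdc)]
  have := Finset.card_le_univ ({a, b, c, d} : Finset α)
  omega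

theorem SimpleGraph.Coloring.eq_of_diamond {V α : Type*} [Fintype α] {G : SimpleGraph V}
    (C : G.Coloring α) (hα : Fintype.card α ≤ 3) {a b c d : V} (hab : G.Adj a b)
    (hac : G.Adj a c) (hbc : G.Adj b c) (hdb : G.Adj d b) (hdc : G.Adj d c) : C a = C d :=
  (eq_of_ne_of_ne_of_card_le_three hα (C.valid hab) (C.valid hac) (C.valid hbc)
    (C.valid hdb) (C.valid hdc)).symm

instance : DecidableRel moserSpindle.Adj := fun u v =>
  decidable_of_iff
    (s(u, v) ∈ ({s(0, 1), s(0, 2), s(0, 3), s(0, 4), s(1, 3), s(2, 4),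
      s(1, 5), s(3, 5), s(2, 6), s(4, 6), s(5, 6)} : Finset (Sym2 (Fin 7))) ∧ u ≠ v)
    (by rw [moserSpindle, SimpleGraph.fromEdgeSet_adj, ← Finset.mem_coe]; push_cast; rfl)

theorem moserSpindle_colorable_four : moserSpindle.Colorable 4 :=
  ⟨SimpleGraph.Coloring.mk ![0, 1, 1, 2, 2, 0, 3] (by decide)⟩

theorem moserSpindle_not_colorable_three : ¬ moserSpindle.Colorable 3 := by
  rintro ⟨C⟩
  have hcard : Fintype.card (Fin 3) ≤ 3 := by simp
  have h5 : C 0 = C 5 := C.eq_of_diamond hcard (b := 1) (c := 3) (by decide) (by decide)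
    (by decide) (by decide) (by decide)
  have h6 : C 0 = C 6 := C.eq_of_diamond hcard (b := 2) (c := 4) (by decide) (by decide)
    (by decide) (by decide) (by decide)
  exact C.valid (show moserSpindle.Adj 5 6 by decide) (h5.symm.trans h6)

/-- The chromatic number of the Moser spindle is exactly 4: it admits a proper coloring
with 4 colors but no proper coloring with 3 colors. -/
theorem moserSpindle_chromatic_number_four :
    (∃ c : Fin 7 → Fin 4, ∀ u v : Fin 7, moserSpindle.Adj u v → c u ≠ c v) ∧
    ¬ ∃ c : Fin 7 → Fin 3, ∀ u v : Fin 7, moserSpindle.Adj u v → c u ≠ c v := by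
  obtain ⟨C⟩ := moserSpindle_colorable_four
  refine ⟨⟨C, fun _ _ => C.valid⟩, ?_⟩
  rintro ⟨c, hc⟩
  exact moserSpindle_not_colorable_three ⟨SimpleGraph.Coloring.mk c (hc _ _)⟩
end

section
/- The chromatic number of the plane is at least 4: for every function c : ℝ² → Fin 3 there exist points p and q in the plane with dist p q = 1 and c p = c q. -/
/-!
Suppose every unit-distance pair of points receives two different colours out of three. Two
equilateral unit triangles glued along an edge form a rhombus whose far vertices are `√3` apart;
the three colours are used up on each triangle, so the far vertices share a colour. Hence every
circle of radius `√3` is monochromatic with the colour of its centre, and such a circle contains a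
unit chord: together these seven points form the Moser spindle.
-/

def IsUnitDistanceColoring {X α : Type*} [PseudoMetricSpace X] (c : X → α) : Prop :=
  ∀ p q : X, dist p q = 1 → c p ≠ c q

theorem Fin.eq_of_ne_of_ne_three {a b c d : Fin 3} (hab : a ≠ b) (hac : a ≠ c) (hbc : b ≠ c)
    (hdb : d ≠ b) (hdc : d ≠ c) : d = a := by
  omega

theorem IsUnitDistanceColoring.eq_of_unit_rhombus {X : Type*} [PseudoMetricSpace X]
    {c : X → Fin 3} (hc : IsUnitDistanceColoring c) {p q u v : X}
    (hup : dist u p = 1) (hvp : dist v p = 1) (huv : dist u v = 1)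
    (huq : dist u q = 1) (hvq : dist v q = 1) : c q = c p :=
  Fin.eq_of_ne_of_ne_three (hc _ _ hup).symm (hc _ _ hvp).symm (hc _ _ huv)
    (hc _ _ huq).symm (hc _ _ hvq).symm

namespace Complex

theorem dist_eq_one_iff {z w : ℂ} :
    dist z w = 1 ↔ (z.re - w.re) ^ 2 + (z.im - w.im) ^ 2 = 1 := by
  rw [dist_eq_re_im, Real.sqrt_eq_one]

theorem isometry_add_mul {z : ℂ} (hz : ‖z‖ = 1) (p : ℂ) : Isometry (fun x ↦ p + z * x) :=
  Isometry.of_dist_eq fun a b ↦ by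
    rw [dist_eq_norm, dist_eq_norm, add_sub_add_left_eq_sub, ← mul_sub, norm_mul, hz, one_mul]

theorem exists_isometry_map_zero_map_ofReal {p q : ℂ} {r : ℝ} (h : dist p q = r) (hr : 0 < r) :
    ∃ f : ℂ → ℂ, Isometry f ∧ f 0 = p ∧ f r = q := by
  have hz : ‖(q - p) / r‖ = 1 := by
    rw [norm_div, ← dist_eq_norm, dist_comm, h, norm_real, Real.norm_of_nonneg hr.le,
      div_self hr.ne']
  refine ⟨_, isometry_add_mul hz p, by simp, ?_⟩
  simp [div_mul_cancel₀ _ (ofReal_ne_zero.mpr hr.ne')]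

theorem exists_unit_rhombus {p q : ℂ} (h : dist p q = √3) :
    ∃ u v, dist u p = 1 ∧ dist v p = 1 ∧ dist u v = 1 ∧ dist u q = 1 ∧ dist v q = 1 := by
  obtain ⟨f, hf, rfl, rfl⟩ := exists_isometry_map_zero_map_ofReal h (by positivity)
  have h3 : √3 ^ 2 = 3 := Real.sq_sqrt (by norm_num)
  refine ⟨f (√3 / 2 + 1 / 2 * I), f (√3 / 2 - 1 / 2 * I), ?_, ?_, ?_, ?_, ?_⟩ <;>
    simp only [hf.dist_eq, dist_eq_one_iff] <;> norm_num <;> linear_combination h3 / 4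

end Complex

theorem IsUnitDistanceColoring.eq_of_dist_eq_sqrt_three {c : ℂ → Fin 3}
    (hc : IsUnitDistanceColoring c) {p q : ℂ} (h : dist p q = √3) : c q = c p := by
  obtain ⟨u, v, hup, hvp, huv, huq, hvq⟩ := Complex.exists_unit_rhombus h
  exact hc.eq_of_unit_rhombus hup hvp huv huq hvq

theorem Complex.not_isUnitDistanceColoring_fin_three (c : ℂ → Fin 3) :
    ¬IsUnitDistanceColoring c := by
  intro hc
  have h3 : √3 ^ 2 = 3 := Real.sq_sqrt (by norm_num)
  have h33 : √33 ^ 2 = 33 := Real.sq_sqrt (by norm_num)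
  have ha : dist 0 (√3 : ℂ) = √3 := by simp
  -- the point `√3 * (5 + √11 * I) / 6` of the circle of radius `√3` about `0`
  have hb : dist 0 (5 * √3 / 6 + √33 / 6 * I) = √3 := by
    rw [dist_eq_re_im]
    congr 1
    norm_num
    linear_combination 25 / 36 * h3 + h33 / 36
  have hab : dist (√3 : ℂ) (5 * √3 / 6 + √33 / 6 * I) = 1 := by
    rw [dist_eq_one_iff]
    norm_num
    linear_combination h3 / 36 + h33 / 36
  exact hc _ _ hab ((hc.eq_of_dist_eq_sqrt_three ha).trans (hc.eq_of_dist_eq_sqrt_three hb).symm)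

/-- The chromatic number of the plane is at least 4: every `3`-coloring of `ℝ²` has two
points at distance exactly `1` receiving the same color. -/
theorem chromatic_number_of_plane_ge_four (c : EuclideanSpace ℝ (Fin 2) → Fin 3) :
    ∃ p q : EuclideanSpace ℝ (Fin 2), dist p q = 1 ∧ c p = c q := by
  let e := Complex.orthonormalBasisOneI.repr
  by_contra! hc
  refine Complex.not_isUnitDistanceColoring_fin_three (c ∘ e) fun p q hpq ↦ hc (e p) (e q) ?_
  rwa [e.dist_map]
end

section
/- The Petersen graph is unit-distance embeddable: there exists an injective map f from the vertices of the Petersen graph to ℝ² such that dist (f u) (f v) = 1 for every edge {u, v}. -/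
/-!
Write a vertex `{a, b}` of the Kneser graph `K(5,2)` as the pair of its type (whether `b = a ± 1`
mod 5) and its label `a + b ∈ ZMod 5`; these determine the vertex. Disjoint consecutive pairs have
labels differing by `±1`, disjoint non-consecutive pairs labels differing by `±2`, and a
consecutive pair is disjoint from exactly the non-consecutive pair with the same label. So the
consecutive pairs form a regular pentagon and the others a pentagram, joined by spokes.
Put the vertex with label `k` at `R ζᵏ` or `i r ζᵏ` (`ζ = e^{2πi/5}`), where `R` and `r` are the
circumradii of the regular pentagon and pentagram with unit sides. The spokes then have length
`√(R² + r²)`, and `R² + r² = 1` because `cos (π/5)` is a root of `4x² - 2x - 1`.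
-/

open Real ZMod
open Complex (I)

namespace Petersen

section Chord

variable {N : ℕ} [NeZero N]

noncomputable def chord (j : ZMod N) : ℝ := ‖1 - stdAddChar j‖

theorem norm_stdAddChar (j : ZMod N) : ‖stdAddChar j‖ = 1 :=
  Circle.norm_coe _

theorem dist_mul_stdAddChar (z w : ℂ) (j k : ZMod N) :
    dist (z * stdAddChar j) (w * stdAddChar k) = ‖z - w * stdAddChar (k - j)‖ := by
  have hk : stdAddChar k = stdAddChar j * stdAddChar (k - j) := by
    rw [← AddChar.map_add_eq_mul, add_sub_cancel]
  rw [dist_eq_norm, hk, ← one_mul ‖z - _‖, ← norm_stdAddChar j, ← norm_mul]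
  congr 1
  ring

theorem norm_sub_mul_stdAddChar_self (z : ℂ) (j : ZMod N) :
    ‖z - z * stdAddChar j‖ = ‖z‖ * chord j := by
  rw [chord, ← norm_mul, mul_one_sub]

theorem chord_intCast (j : ℤ) : chord (j : ZMod N) = |2 * sin (π * j / N)| := by
  rw [chord, stdAddChar_coe, norm_sub_rev,
    show 2 * (π : ℂ) * I * j / N = I * ((2 * π * j / N : ℝ) : ℂ) by push_cast; ring,
    Complex.norm_exp_I_mul_ofReal_sub_one, Real.norm_eq_abs]
  congr 3
  ring

theorem chord_neg (j : ZMod N) : chord (-j) = chord j := by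
  obtain ⟨n, rfl⟩ := ZMod.intCast_surjective j
  rw [← Int.cast_neg, chord_intCast, chord_intCast, Int.cast_neg, mul_neg, neg_div, sin_neg,
    mul_neg, abs_neg]

theorem chord_pos {j : ZMod N} (hj : j ≠ 0) : 0 < chord j := by
  rw [chord, norm_pos_iff, sub_ne_zero, ← (stdAddChar (N := N)).map_zero_eq_one,
    injective_stdAddChar.ne_iff]
  exact hj.symm

end Chord

theorem norm_ofReal_sub_ofReal_mul_I {x y : ℝ} (h : x ^ 2 + y ^ 2 = 1) :
    ‖(x : ℂ) - y * I‖ = 1 := by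
  rw [sub_eq_add_neg, ← neg_mul, ← Complex.ofReal_neg, Complex.norm_add_mul_I, neg_sq, h, sqrt_one]

theorem sin_pi_div_five_pos : 0 < sin (π / 5) :=
  sin_pos_of_pos_of_lt_pi (by positivity) (by linarith [pi_pos])

theorem cos_pi_div_five_pos : 0 < cos (π / 5) :=
  cos_pos_of_mem_Ioo ⟨by linarith [pi_pos], by linarith [pi_pos]⟩

theorem chord_one : chord (1 : ZMod 5) = 2 * sin (π / 5) := by
  have h := chord_intCast (N := 5) 1
  rw [Int.cast_one] at h
  rw [h, show π * ((1 : ℤ) : ℝ) / ((5 : ℕ) : ℝ) = π / 5 by push_cast; ring,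
    abs_of_pos (by linarith [sin_pi_div_five_pos])]

theorem chord_two : chord (2 : ZMod 5) = 4 * sin (π / 5) * cos (π / 5) := by
  have h := chord_intCast (N := 5) 2
  rw [Int.cast_ofNat] at h
  rw [h, show π * ((2 : ℤ) : ℝ) / ((5 : ℕ) : ℝ) = 2 * (π / 5) by push_cast; ring, sin_two_mul,
    abs_of_pos (by nlinarith [sin_pi_div_five_pos, cos_pi_div_five_pos])]
  ring

/-- The circumradius of a regular pentagon with unit sides. -/
noncomputable def outerRadius : ℝ := (chord (1 : ZMod 5))⁻¹

/-- The circumradius of a regular pentagram with unit sides. -/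
noncomputable def innerRadius : ℝ := (chord (2 : ZMod 5))⁻¹

theorem outerRadius_mul_chord_one : outerRadius * chord (1 : ZMod 5) = 1 :=
  inv_mul_cancel₀ (chord_pos (by decide)).ne'

theorem innerRadius_mul_chord_two : innerRadius * chord (2 : ZMod 5) = 1 :=
  inv_mul_cancel₀ (chord_pos (by decide)).ne'

theorem outerRadius_pos : 0 < outerRadius :=
  inv_pos.2 (chord_pos (by decide))

theorem innerRadius_pos : 0 < innerRadius :=
  inv_pos.2 (chord_pos (by decide))

theorem outerRadius_sq_add_innerRadius_sq : outerRadius ^ 2 + innerRadius ^ 2 = 1 := by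
  have hs := sin_pi_div_five_pos
  have hc := cos_pi_div_five_pos
  rw [outerRadius, innerRadius, chord_one, chord_two]
  field_simp
  linear_combination -64 * cos (π / 5) ^ 2 * sin_sq_add_cos_sq (π / 5)
    + 4 * (4 * cos (π / 5) ^ 2 + 2 * cos (π / 5) - 1) * quadratic_root_cos_pi_div_five

theorem outerRadius_ne_innerRadius : outerRadius ≠ innerRadius := by
  have hs := sin_pi_div_five_pos
  rw [outerRadius, innerRadius, chord_one, chord_two, Ne, inv_inj]
  intro h
  have hc : cos (π / 5) = 1 / 2 := by
    apply mul_left_cancel₀ hs.ne'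
    linear_combination -h / 4
  have := quadratic_root_cos_pi_div_five
  rw [hc] at this
  norm_num at this

def IsConsecutive (s : Finset (Fin 5)) : Prop := ∃ i : Fin 5, s = {i, i + 1}

instance : DecidablePred IsConsecutive := fun s =>
  inferInstanceAs (Decidable (∃ i : Fin 5, s = {i, i + 1}))

def label (s : Finset (Fin 5)) : ZMod 5 := ∑ x ∈ s, (x : ZMod 5)

theorem eq_of_isConsecutive_iff_of_label_eq :
    ∀ a b : {s : Finset (Fin 5) // s.card = 2},
      (IsConsecutive a.1 ↔ IsConsecutive b.1) → label a.1 = label b.1 → a = b := by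
  decide

theorem label_sub_label_of_disjoint :
    ∀ a b : {s : Finset (Fin 5) // s.card = 2}, Disjoint a.1 b.1 →
      (IsConsecutive a.1 ∧ IsConsecutive b.1 ∧
          (label b.1 - label a.1 = 1 ∨ label b.1 - label a.1 = -1)) ∨
      (¬IsConsecutive a.1 ∧ ¬IsConsecutive b.1 ∧
          (label b.1 - label a.1 = 2 ∨ label b.1 - label a.1 = -2)) ∨
      (¬(IsConsecutive a.1 ↔ IsConsecutive b.1) ∧ label b.1 - label a.1 = 0) := by
  decide

noncomputable def point (s : Finset (Fin 5)) : ℂ :=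
  (if IsConsecutive s then (outerRadius : ℂ) else innerRadius * I) * stdAddChar (label s)

theorem norm_point (s : Finset (Fin 5)) :
    ‖point s‖ = if IsConsecutive s then outerRadius else innerRadius := by
  rw [point, norm_mul, norm_stdAddChar, mul_one]
  split_ifs
  · exact Complex.norm_of_nonneg outerRadius_pos.le
  · rw [norm_mul, Complex.norm_I, mul_one, Complex.norm_of_nonneg innerRadius_pos.le]

theorem point_injective :
    Function.Injective fun v : {s : Finset (Fin 5) // s.card = 2} => point v.1 := by
  intro a b h
  have hnorm := congrArg norm h
  simp only [norm_point] at hnorm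
  have htype : IsConsecutive a.1 ↔ IsConsecutive b.1 := by
    split_ifs at hnorm with ha hb hb
    · exact iff_of_true ha hb
    · exact absurd hnorm outerRadius_ne_innerRadius
    · exact absurd hnorm.symm outerRadius_ne_innerRadius
    · exact iff_of_false ha hb
  refine eq_of_isConsecutive_iff_of_label_eq a b htype (injective_stdAddChar ?_)
  have hcoeff : (if IsConsecutive b.1 then (outerRadius : ℂ) else innerRadius * I) ≠ 0 := by
    split_ifs
    · exact_mod_cast outerRadius_pos.ne'
    · exact mul_ne_zero (by exact_mod_cast innerRadius_pos.ne') Complex.I_ne_zero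
  simp only [point, htype] at h
  exact mul_left_cancel₀ hcoeff h

theorem dist_point_of_disjoint {a b : {s : Finset (Fin 5) // s.card = 2}}
    (h : Disjoint a.1 b.1) : dist (point a.1) (point b.1) = 1 := by
  rw [point, point, dist_mul_stdAddChar]
  rcases label_sub_label_of_disjoint a b h with ⟨ha, hb, hd⟩ | ⟨ha, hb, hd⟩ | ⟨hab, hd⟩
  · rw [if_pos ha, if_pos hb, norm_sub_mul_stdAddChar_self,
      Complex.norm_of_nonneg outerRadius_pos.le]
    rcases hd with hd | hd <;> simp only [hd, chord_neg, outerRadius_mul_chord_one]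
  · rw [if_neg ha, if_neg hb, norm_sub_mul_stdAddChar_self, norm_mul, Complex.norm_I, mul_one,
      Complex.norm_of_nonneg innerRadius_pos.le]
    rcases hd with hd | hd <;> simp only [hd, chord_neg, innerRadius_mul_chord_two]
  · have hspoke := norm_ofReal_sub_ofReal_mul_I outerRadius_sq_add_innerRadius_sq
    rw [hd, AddChar.map_zero_eq_one, mul_one]
    by_cases ha : IsConsecutive a.1
    · rw [if_pos ha, if_neg fun hb => hab (iff_of_true ha hb), hspoke]
    · rw [if_neg ha, if_pos (by tauto), norm_sub_rev, hspoke]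

end Petersen

/-- The Petersen graph (the Kneser graph `K(5,2)`: vertices are `2`-element subsets of a
`5`-element set, adjacent iff disjoint) is unit-distance embeddable. -/
theorem petersen_unit_distance_embeddable :
    ∃ f : {s : Finset (Fin 5) // s.card = 2} → EuclideanSpace ℝ (Fin 2),
      Function.Injective f ∧
        ∀ a b : {s : Finset (Fin 5) // s.card = 2},
          Disjoint a.1 b.1 → dist (f a) (f b) = 1 := by
  let toPlane := Complex.orthonormalBasisOneI.repr
  refine ⟨fun v => toPlane (Petersen.point v.1), toPlane.injective.comp Petersen.point_injective,
    fun a b h => ?_⟩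
  rw [toPlane.dist_map]
  exact Petersen.dist_point_of_disjoint h
end

section
/- For every natural number n, the n-dimensional hypercube graph Qₙ is unit-distance embeddable: there exists an injective map f : (Fin n → Bool) → ℝ² such that dist (f x) (f y) = 1 whenever x and y differ in exactly one coordinate. -/
/-!
Send a vertex `x` to the sum of unit vectors `vᵢ` over the coordinates where `x i` holds, so
that adjacent vertices are sent to points differing by `±vᵢ`. Taking `2 ^ i / 2 ^ n` as the first
coordinate of `vᵢ`, the first coordinate of the image of `x` is its binary expansion scaled by
`2 ^ (-n)`, which makes the map injective.
-/

open Function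

section SubsetSum

variable {ι E F G : Type*} [Fintype ι]

def subsetSum [AddCommMonoid E] (v : ι → E) (x : ι → Bool) : E := ∑ i with x i, v i

lemma map_subsetSum [AddCommMonoid E] [AddCommMonoid F] [FunLike G E F] [AddMonoidHomClass G E F]
    (L : G) (v : ι → E) (x : ι → Bool) : L (subsetSum v x) = subsetSum (L ∘ v) x :=
  map_sum L v _

lemma Function.Injective.of_subsetSum_comp [AddCommMonoid E] [AddCommMonoid F] [FunLike G E F]
    [AddMonoidHomClass G E F] {L : G} {v : ι → E} (h : Injective (subsetSum (L ∘ v))) :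
    Injective (subsetSum v) :=
  Injective.of_comp (f := L) (by simpa only [comp_def, map_subsetSum] using h)

lemma dist_subsetSum_eq_norm [SeminormedAddCommGroup E] (v : ι → E) {x y : ι → Bool} {i : ι}
    (hi : x i ≠ y i) (h : ∀ j ≠ i, x j = y j) :
    dist (subsetSum v x) (subsetSum v y) = ‖v i‖ := by
  rw [dist_eq_norm, subsetSum, subsetSum, Finset.sum_filter, Finset.sum_filter,
    ← Finset.sum_sub_distrib, Finset.sum_eq_single i (fun j _ hj => by simp [h j hj]) (by simp)]
  cases hx : x i <;> cases hy : y i <;> simp_all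

lemma subsetSum_two_pow_injective (R : Type*) [Semiring R] [CharZero R] (n : ℕ) :
    Injective (subsetSum (fun i : Fin n => (2 : R) ^ (i : ℕ))) := by
  intro x y hxy
  have hsupp : Finset.univ.filter (x · = true) = Finset.univ.filter (y · = true) := by
    apply Finset.map_injective Fin.valEmbedding
    apply Finset.geomSum_injective le_rfl
    simpa only [subsetSum, Finset.sum_map, Fin.valEmbedding_apply, ← Nat.cast_ofNat (R := R),
      ← Nat.cast_pow, ← Nat.cast_sum, Nat.cast_inj] using hxy
  funext i
  simpa using congrArg (i ∈ ·) hsupp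

end SubsetSum

lemma norm_mk_sqrt_one_sub_sq {a : ℝ} (ha : |a| ≤ 1) : ‖!₂[a, √(1 - a ^ 2)]‖ = 1 := by
  have : 0 ≤ 1 - a ^ 2 := sub_nonneg.2 ((sq_le_one_iff_abs_le_one a).2 ha)
  simp [EuclideanSpace.norm_eq, Fin.sum_univ_two, Real.sq_sqrt this]

/-- For every `n`, the hypercube graph `Qₙ` (vertices `Fin n → Bool`, adjacent iff they
differ in exactly one coordinate) is unit-distance embeddable. -/
theorem hypercube_unit_distance_embeddable (n : ℕ) :
    ∃ f : (Fin n → Bool) → EuclideanSpace ℝ (Fin 2),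
      Function.Injective f ∧
        ∀ x y : Fin n → Bool, (∃! i : Fin n, x i ≠ y i) → dist (f x) (f y) = 1 := by
  let a : Fin n → ℝ := fun i => 2 ^ (i : ℕ) / 2 ^ n
  have ha : ∀ i, |a i| ≤ 1 := fun i => by
    rw [abs_div, div_le_one (by positivity)]
    simpa using pow_le_pow_right₀ one_le_two i.is_lt.le
  let v : Fin n → EuclideanSpace ℝ (Fin 2) := fun i => !₂[a i, √(1 - a i ^ 2)]
  let L := (2 : ℝ) ^ n • EuclideanSpace.proj (𝕜 := ℝ) (0 : Fin 2)
  have hLv : L ∘ v = fun i : Fin n => (2 : ℝ) ^ (i : ℕ) := by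
    funext i
    simp [L, v, a, mul_div_cancel₀]
  refine ⟨subsetSum v, Injective.of_subsetSum_comp (L := L) ?_, fun x y ⟨i, hi, huniq⟩ => ?_⟩
  · exact hLv ▸ subsetSum_two_pow_injective ℝ n
  · rw [dist_subsetSum_eq_norm v hi fun j hj => not_not.1 (mt (huniq j) hj),
      norm_mk_sqrt_one_sub_sq (ha i)]
end

section
/- The Möbius ladder M₄ with each rung subdivided once is unit-distance embeddable: there exists an injective map f : (Fin 8 ⊕ Fin 4) → ℝ² such that dist (f u) (f v) = 1 for every edge {u, v} of the subdivided Möbius ladder. -/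
/-- The Möbius ladder `M₄` with each rung subdivided once: vertices `Fin 8 ⊕ Fin 4`, cycle
edges `{inl i, inl (i+1)}` for `i : Fin 8`, and for each `k : Fin 4` the subdivided rung
edges `{inl k, inr k}` and `{inr k, inl (k+4)}`. -/
def subdividedMobiusLadder : SimpleGraph (Fin 8 ⊕ Fin 4) :=
  SimpleGraph.fromRel (fun u v =>
    (∃ i : Fin 8, u = Sum.inl i ∧ v = Sum.inl (i + 1)) ∨
    (∃ k : Fin 4,
      (u = Sum.inl (Fin.castLE (by omega) k) ∧ v = Sum.inr k) ∨
      (u = Sum.inr k ∧ v = Sum.inl (Fin.castLE (by omega) k + 4))))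

/-! All vertices are placed on the lattice `(1/65) ℤ²`. Since
`65² = 39² + 52² = 25² + 60² = 33² + 56²`, this lattice has many vectors of length `1`, and
every edge of the ladder is realised by one of them, so the verification is integer arithmetic. -/

theorem dist_eq_one_of_fromRel_adj {V X : Type*} [PseudoMetricSpace X] {r : V → V → Prop}
    {f : V → X} (h : ∀ u v, r u v → dist (f u) (f v) = 1) {u v : V}
    (huv : (SimpleGraph.fromRel r).Adj u v) : dist (f u) (f v) = 1 := by
  obtain ⟨-, huv | hvu⟩ := huv
  · exact h u v huv
  · rw [dist_comm]
    exact h v u hvu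

section LatticePoint

variable {n : ℕ}

noncomputable def latticePoint (n : ℕ) (p : ℤ × ℤ) : EuclideanSpace ℝ (Fin 2) :=
  !₂[p.1 / n, p.2 / n]

def latticeSqDist (p q : ℤ × ℤ) : ℤ :=
  (p.1 - q.1) ^ 2 + (p.2 - q.2) ^ 2

theorem latticePoint_injective (hn : n ≠ 0) : Function.Injective (latticePoint n) := by
  intro p q hpq
  have hn' : (n : ℝ) ≠ 0 := by exact_mod_cast hn
  have h₁ := congrArg (· 0) hpq
  have h₂ := congrArg (· 1) hpq
  simp only [latticePoint, Matrix.cons_val_zero, Matrix.cons_val_one, Matrix.cons_val_fin_one,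
    div_left_inj' hn', Int.cast_inj] at h₁ h₂
  exact Prod.ext h₁ h₂

theorem dist_latticePoint_eq_one (hn : n ≠ 0) {p q : ℤ × ℤ} (h : latticeSqDist p q = n ^ 2) :
    dist (latticePoint n p) (latticePoint n q) = 1 := by
  have hn' : (n : ℝ) ≠ 0 := by exact_mod_cast hn
  have hR : ((p.1 : ℝ) - q.1) ^ 2 + ((p.2 : ℝ) - q.2) ^ 2 = (n : ℝ) ^ 2 := by
    exact_mod_cast h
  rw [EuclideanSpace.dist_eq, Fin.sum_univ_two, Real.sqrt_eq_one]
  simp only [latticePoint, Matrix.cons_val_zero, Matrix.cons_val_one, Matrix.cons_val_fin_one,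
    Real.dist_eq, sq_abs]
  field_simp
  linear_combination hR

end LatticePoint

def mobiusLadderCoords : Fin 8 ⊕ Fin 4 → ℤ × ℤ :=
  Sum.elim ![(0, 0), (39, -52), (99, -27), (60, 25), (85, -35), (20, -35), (72, 4), (33, 56)]
    ![(25, -60), (-13, -91), (132, 29), (93, 81)]

theorem mobiusLadderCoords_injective : Function.Injective mobiusLadderCoords := by
  decide

theorem latticeSqDist_mobiusLadderCoords_cycle (i : Fin 8) :
    latticeSqDist (mobiusLadderCoords (.inl i)) (mobiusLadderCoords (.inl (i + 1))) = 65 ^ 2 := by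
  revert i
  decide

theorem latticeSqDist_mobiusLadderCoords_rung (k : Fin 4) :
    latticeSqDist (mobiusLadderCoords (.inl (Fin.castLE (by omega) k)))
        (mobiusLadderCoords (.inr k)) = 65 ^ 2 ∧
      latticeSqDist (mobiusLadderCoords (.inr k))
        (mobiusLadderCoords (.inl (Fin.castLE (by omega) k + 4))) = 65 ^ 2 := by
  revert k
  decide

/-- The subdivided Möbius ladder `M₄` is unit-distance embeddable. -/
theorem subdividedMobiusLadder_unit_distance_embeddable :
    ∃ f : Fin 8 ⊕ Fin 4 → EuclideanSpace ℝ (Fin 2),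
      Function.Injective f ∧
        ∀ u v : Fin 8 ⊕ Fin 4, subdividedMobiusLadder.Adj u v → dist (f u) (f v) = 1 := by
  refine ⟨latticePoint 65 ∘ mobiusLadderCoords,
    (latticePoint_injective (by norm_num)).comp mobiusLadderCoords_injective,
    fun u v huv => dist_eq_one_of_fromRel_adj (fun u v hr => ?_) huv⟩
  refine dist_latticePoint_eq_one (by norm_num) ?_
  rcases hr with ⟨i, rfl, rfl⟩ | ⟨k, ⟨rfl, rfl⟩ | ⟨rfl, rfl⟩⟩
  · exact latticeSqDist_mobiusLadderCoords_cycle i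
  · exact (latticeSqDist_mobiusLadderCoords_rung k).1
  · exact (latticeSqDist_mobiusLadderCoords_rung k).2
end
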